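/- arXiv:1805.07899 — 7 statements merged into one kernel-verified Lean document; each statement's English description precedes it below -/
import Mathlib

section
/- Let r, d, m ≥ 1 and let A = {(M_j, b_j)}_{j=1}^m with M_j ∈ ℝ^{d×r} and b_j ∈ ℝ^r. Then the map M_A : ℝ^d → ℝ^m defined by M_A(x) = (‖M_1ᵀx + b_1‖², …, ‖M_mᵀx + b_m‖²) is injective on ℝ^d if and only if for every u ∈ ℝ^d and every nonzero v ∈ ℝ^d there exists j with 1 ≤ j ≤ m such that uᵀ M_j M_jᵀ v + (M_j b_j)ᵀ v ≠ 0. -/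
/-!
Each measurement satisfies `f_j(x) - f_j(y) = 2 B_j((x + y)/2, x - y)` with
`B_j(u, v) = uᵀ M_j M_jᵀ v + (M_j b_j)ᵀ v`. Every pair `x ≠ y` is `u ± v/2` for its midpoint `u`
and the nonzero difference `v`, so a collision of the measurement map is the same thing as a
pair `(u, v ≠ 0)` annihilated by every `B_j`.
-/

open Matrix

section

variable {K V ι : Type*} [Field K] [NeZero (2 : K)] [AddCommGroup V] [Module K V]

theorem injective_iff_forall_exists_ne_zero_of_eq_iff (F : V → ι → K) (B : ι → V → V → K)
    (hF : ∀ j x y, F x j = F y j ↔ B j ((2⁻¹ : K) • (x + y)) (x - y) = 0) :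
    Function.Injective F ↔ ∀ u v, v ≠ 0 → ∃ j, B j u v ≠ 0 := by
  constructor
  · intro hinj u v hv
    by_contra! hB
    have hsub : u + (2⁻¹ : K) • v - (u - (2⁻¹ : K) • v) = v := by
      match_scalars <;> field_simp <;> ring
    have hmid : (2⁻¹ : K) • (u + (2⁻¹ : K) • v + (u - (2⁻¹ : K) • v)) = u := by
      match_scalars <;> field_simp <;> ring
    have hF_eq : F (u + (2⁻¹ : K) • v) = F (u - (2⁻¹ : K) • v) :=
      funext fun j => (hF j _ _).2 (by rw [hmid, hsub]; exact hB j)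
    exact hv (by rw [← hsub, hinj hF_eq, sub_self])
  · intro hB x y hxy
    by_contra hne
    obtain ⟨j, hj⟩ := hB _ (x - y) (sub_ne_zero.mpr hne)
    exact hj ((hF j x y).1 (congrFun hxy j))

end

section

variable {R : Type*} [CommRing R] {m n : Type*} [Fintype m] [Fintype n]

theorem sum_sq_sub_sum_sq_mulVec_transpose_add (N : Matrix m n R) (c : n → R) (x y : m → R) :
    ∑ i, (Nᵀ *ᵥ x + c) i ^ 2 - ∑ i, (Nᵀ *ᵥ y + c) i ^ 2
      = (x + y) ⬝ᵥ (N * Nᵀ) *ᵥ (x - y) + 2 * (N *ᵥ c ⬝ᵥ (x - y)) := by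
  have sum_sq (w : n → R) : ∑ i, w i ^ 2 = w ⬝ᵥ w := by simp only [dotProduct, sq]
  simp only [sum_sq, mulVec_transpose, ← mulVec_mulVec, dotProduct_mulVec,
    add_vecMul, sub_vecMul, dotProduct_comm (N *ᵥ c), add_dotProduct, dotProduct_add,
    dotProduct_sub, sub_dotProduct, dotProduct_comm c, dotProduct_comm (y ᵥ* N) (x ᵥ* N)]
  ring

end

theorem sum_sq_mulVec_transpose_add_eq_iff {K : Type*} [Field K] [NeZero (2 : K)]
    {m n : Type*} [Fintype m] [Fintype n] (N : Matrix m n K) (c : n → K) (x y : m → K) :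
    ∑ i, (Nᵀ *ᵥ x + c) i ^ 2 = ∑ i, (Nᵀ *ᵥ y + c) i ^ 2 ↔
      (2⁻¹ : K) • (x + y) ⬝ᵥ (N * Nᵀ) *ᵥ (x - y) + N *ᵥ c ⬝ᵥ (x - y) = 0 := by
  have halve : (x + y) ⬝ᵥ (N * Nᵀ) *ᵥ (x - y) + 2 * (N *ᵥ c ⬝ᵥ (x - y))
      = 2 * ((2⁻¹ : K) • (x + y) ⬝ᵥ (N * Nᵀ) *ᵥ (x - y) + N *ᵥ c ⬝ᵥ (x - y)) := by
    rw [smul_dotProduct, smul_eq_mul, mul_add, mul_inv_cancel_left₀ two_ne_zero]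
  rw [← sub_eq_zero, sum_sq_sub_sum_sq_mulVec_transpose_add, halve, mul_eq_zero,
    or_iff_right two_ne_zero]

theorem gapr_iff_real_general
    (r d m : ℕ)
    (M : Fin m → Matrix (Fin d) (Fin r) ℝ) (b : Fin m → Fin r → ℝ) :
    Function.Injective (fun x : Fin d → ℝ => fun j : Fin m =>
      ∑ i : Fin r, ((M j)ᵀ.mulVec x + b j) i ^ 2)
    ↔ ∀ u v : Fin d → ℝ, v ≠ 0 → ∃ j : Fin m,
        u ⬝ᵥ (M j * (M j)ᵀ).mulVec v + (M j).mulVec (b j) ⬝ᵥ v ≠ 0 :=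
  injective_iff_forall_exists_ne_zero_of_eq_iff _ _ fun j x y =>
    sum_sq_mulVec_transpose_add_eq_iff (M j) (b j) x y

/-- The measurement map `M_A(x) = (‖M_jᵀx + b_j‖²)_{j=1}^m` is injective
on ℝ^d iff for all `u` and all nonzero `v` there is `j` with
`uᵀ M_j M_jᵀ v + (M_j b_j)ᵀ v ≠ 0`. -/
theorem gapr_iff_real
    (r d m : ℕ) (hr : 1 ≤ r) (hd : 1 ≤ d) (hm : 1 ≤ m)
    (M : Fin m → Matrix (Fin d) (Fin r) ℝ) (b : Fin m → Fin r → ℝ) :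
    Function.Injective (fun x : Fin d → ℝ => fun j : Fin m =>
      ∑ i : Fin r, ((M j)ᵀ.mulVec x + b j) i ^ 2)
    ↔ ∀ u v : Fin d → ℝ, v ≠ 0 → ∃ j : Fin m,
        u ⬝ᵥ (M j * (M j)ᵀ).mulVec v + (M j).mulVec (b j) ⬝ᵥ v ≠ 0 :=
  gapr_iff_real_general r d m M b
end

section
/- Let r, d ≥ 1 and let m ≥ d + ⌊d/r⌋ + ε_{d,r}, where ε_{d,r} = 0 if r divides d and ε_{d,r} = 1 otherwise. Then there exists a collection A = {(M_j, b_j)}_{j=1}^m with M_j ∈ ℝ^{d×r} and b_j ∈ ℝ^r which has the generalized affine phase retrieval property for ℝ^d. -/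
/-!
Split the coordinates of `x ∈ ℝ^d` into `⌈d/r⌉` blocks of at most `r` coordinates, each read
as a vector of `ℝ^r`. One measurement per block, `‖u‖²` with `u` the block of `x`, and one per
coordinate `t`, `‖u + e_c‖² = ‖u‖² + 2 x_t + 1` with `u` the block of `t` and `c` its position
there, recover every coordinate; this uses `⌈d/r⌉ + d = d + ⌊d/r⌋ + ε_{d,r}` measurements.
-/

open Matrix

variable {ι κ n β ρ : Type*} [Fintype n]

section AffinePhaseRetrieval

variable [Fintype ρ]

def HasAffinePhaseRetrieval (M : ι → Matrix n ρ ℝ) (b : ι → ρ → ℝ) : Prop :=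
  Function.Injective fun (x : n → ℝ) (j : ι) => ∑ i, ((M j)ᵀ *ᵥ x + b j) i ^ 2

theorem HasAffinePhaseRetrieval.of_comp {M : κ → Matrix n ρ ℝ} {b : κ → ρ → ℝ} (f : ι → κ)
    (h : HasAffinePhaseRetrieval (M ∘ f) (b ∘ f)) : HasAffinePhaseRetrieval M b :=
  fun _ _ hxy => h (funext fun j => congrFun hxy (f j))

theorem HasAffinePhaseRetrieval.exists_of_card_le [Fintype ι] [Fintype κ]
    {M : ι → Matrix n ρ ℝ} {b : ι → ρ → ℝ} (h : HasAffinePhaseRetrieval M b)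
    (hcard : Fintype.card ι ≤ Fintype.card κ) :
    ∃ (M' : κ → Matrix n ρ ℝ) (b' : κ → ρ → ℝ), HasAffinePhaseRetrieval M' b' := by
  obtain ⟨e⟩ := Function.Embedding.nonempty_of_card_le hcard
  refine ⟨Function.extend e M 0, Function.extend e b 0, .of_comp e ?_⟩
  rwa [Function.extend_comp e.injective, Function.extend_comp e.injective]

theorem sum_add_single_one_sq [DecidableEq ρ] (u : ρ → ℝ) (c : ρ) :
    ∑ i, (u + Pi.single c 1 : ρ → ℝ) i ^ 2 = ∑ i, u i ^ 2 + 2 * u c + 1 := by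
  have sum_sq (w : ρ → ℝ) : ∑ i, w i ^ 2 = w ⬝ᵥ w := by simp only [dotProduct, sq]
  rw [sum_sq, sum_sq, add_dotProduct, dotProduct_add, dotProduct_add, dotProduct_single_one,
    single_one_dotProduct, dotProduct_single_one, Pi.single_eq_same]
  ring

end AffinePhaseRetrieval

section Blocks

variable [DecidableEq β] [DecidableEq ρ] (φ : n → β × ρ)

/-- `φ i = (k, c)` places coordinate `i` at position `c` of block `k`. -/
def blockMatrix (k : β) : Matrix n ρ ℝ :=
  of fun i c => if φ i = (k, c) then 1 else 0

theorem blockMatrix_transpose_mulVec_apply {φ : n → β × ρ} (hφ : φ.Injective) (x : n → ℝ)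
    {t : n} {k : β} {c : ρ} (ht : φ t = (k, c)) : ((blockMatrix φ k)ᵀ *ᵥ x) c = x t := by
  simp only [blockMatrix, mulVec, dotProduct, transpose_apply, of_apply, ite_mul, one_mul, zero_mul]
  rw [Finset.sum_eq_single t (fun i _ hi => if_neg (ht ▸ hφ.ne hi)) (by simp), if_pos ht]

def blockMeasurementMatrix : β ⊕ n → Matrix n ρ ℝ
  | .inl k => blockMatrix φ k
  | .inr t => blockMatrix φ (φ t).1

def blockMeasurementShift : β ⊕ n → ρ → ℝ
  | .inl _ => 0
  | .inr t => Pi.single (φ t).2 1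

theorem hasAffinePhaseRetrieval_blockMeasurement [Fintype ρ] {φ : n → β × ρ} (hφ : φ.Injective) :
    HasAffinePhaseRetrieval (blockMeasurementMatrix φ) (blockMeasurementShift φ) := by
  intro x y hxy
  funext t
  rcases ht : φ t with ⟨k, c⟩
  have hblock := congrFun hxy (.inl k)
  have hcoord := congrFun hxy (.inr t)
  simp only [blockMeasurementMatrix, blockMeasurementShift, ht, add_zero, sum_add_single_one_sq,
    blockMatrix_transpose_mulVec_apply hφ _ ht] at hblock hcoord
  linarith

end Blocks

theorem le_mul_div_add_ite {d r : ℕ} (hr : 1 ≤ r) :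
    d ≤ (d / r + if r ∣ d then 0 else 1) * r := by
  split_ifs with hdvd
  · rw [add_zero, Nat.div_mul_cancel hdvd]
  · nlinarith [Nat.mod_lt d hr, Nat.div_add_mod' d r]

theorem gapr_exists_real_general
    (r d m : ℕ) (hr : 1 ≤ r)
    (hm : d + d / r + (if r ∣ d then 0 else 1) ≤ m) :
    ∃ (M : Fin m → Matrix (Fin d) (Fin r) ℝ) (b : Fin m → Fin r → ℝ),
      Function.Injective (fun x : Fin d → ℝ => fun j : Fin m =>
        ∑ i : Fin r, ((M j)ᵀ.mulVec x + b j) i ^ 2) := by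
  set s := d / r + if r ∣ d then 0 else 1
  let φ : Fin d → Fin s × Fin r := finProdFinEquiv.symm ∘ Fin.castLE (le_mul_div_add_ite hr)
  have hφ : φ.Injective := finProdFinEquiv.symm.injective.comp (Fin.castLE_injective _)
  refine (hasAffinePhaseRetrieval_blockMeasurement hφ).exists_of_card_le ?_
  simp only [Fintype.card_sum, Fintype.card_fin]
  omega

/-- For `m ≥ d + ⌊d/r⌋ + ε_{d,r}` (with `ε_{d,r} = 0` if `r ∣ d` and `1`
otherwise) there exist measurements `{(M_j, b_j)}_{j=1}^m ⊂ ℝ^{d×r} × ℝ^r` having the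
generalized affine phase retrieval property for ℝ^d. -/
theorem gapr_exists_real
    (r d m : ℕ) (hr : 1 ≤ r) (hd : 1 ≤ d)
    (hm : d + d / r + (if r ∣ d then 0 else 1) ≤ m) :
    ∃ (M : Fin m → Matrix (Fin d) (Fin r) ℝ) (b : Fin m → Fin r → ℝ),
      Function.Injective (fun x : Fin d → ℝ => fun j : Fin m =>
        ∑ i : Fin r, ((M j)ᵀ.mulVec x + b j) i ^ 2) :=
  gapr_exists_real_general r d m hr hm
end

section
/- Let r, d ≥ 1 and m ≥ 2d. Then there exists a nonzero real polynomial P in the m(dr + r) real coordinates of a tuple ((M_1, b_1), …, (M_m, b_m)) ∈ (ℝ^{d×r} × ℝ^r)^m such that every tuple with P((M_1, b_1), …, (M_m, b_m)) ≠ 0 has the generalized affine phase retrieval property for ℝ^d. In particular, a generic tuple of m ≥ 2d measurements has the generalized affine phase retrieval property for ℝ^d. -/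
/-!
Write `u = x - y` and `v = x + y`. Equal measurements `‖M_jᵀ x + b_j‖² = ‖M_jᵀ y + b_j‖²` say
`uᵀ G_j (v, 1) = 0` with `G_j = [M_j M_jᵀ | 2 M_j b_j]`, so the `2d × (d+1)` matrix with rows
`uᵀ G_j` has a nonzero kernel vector and each of its `(d+1)`-minors, a form of degree `d+1` in `u`,
vanishes at `u`. There are `C(2d, d+1)` minors and as many monomials of degree `d+1` in `d`
variables; `P` is the determinant of the square matrix of their coefficients at the generic tuple
(only the first `2d` measurements are used). If `P ≠ 0`, every monomial `u_i ^ (d+1)` is a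
combination of the minors, so `u = 0`.

`P ≠ 0` because at `M_j = (j^i)_i e₁ᵀ`, `b_j = (j^d / 2) e₁` the minor on the rows `T` is a
Vandermonde determinant times `∏_{j ∈ T} ∑_i u_i j^i`. At the coefficient vector of
`∏_{k ∉ T'} (z - k)` it vanishes unless `T ⊆ T'`, i.e. `T = T'`, so these evaluations form a
nonsingular diagonal matrix, which factors through the coefficient matrix.
-/

open Matrix

noncomputable section

namespace MvPolynomial

variable {R σ ι : Type*} [CommRing R]

theorem isHomogeneous_det {κ : Type*} [Fintype κ] [DecidableEq κ]
    {A : Matrix κ κ (MvPolynomial σ R)} {k : ℕ} (hA : ∀ i j, (A i j).IsHomogeneous k) :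
    A.det.IsHomogeneous (Fintype.card κ * k) := by
  rw [det_apply']
  refine IsHomogeneous.sum _ _ _ fun τ _ => ?_
  have hsign : IsHomogeneous ((Equiv.Perm.sign τ : ℤ) : MvPolynomial σ R) 0 := by
    rw [← map_intCast (C : R →+* MvPolynomial σ R)]
    exact isHomogeneous_C _ _
  have := hsign.mul (IsHomogeneous.prod Finset.univ _ (fun _ => k) fun i _ => hA (τ i) i)
  rwa [zero_add, Finset.sum_const, smul_eq_mul, Finset.card_univ] at this

variable [Fintype σ] [DecidableEq σ]

def monomialValues (u : σ → R) (n : ℕ) (s : Sym σ n) : R :=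
  ∏ i, u i ^ (s : Multiset σ).count i

def coeffMatrix (p : ι → MvPolynomial σ R) (n : ℕ) : Matrix ι (Sym σ n) R :=
  Matrix.of fun T s => coeff (Multiset.toFinsupp (s : Multiset σ)) (p T)

theorem IsHomogeneous.eval_eq_sum_sym {f : MvPolynomial σ R} {n : ℕ} (hf : f.IsHomogeneous n)
    (u : σ → R) :
    eval u f =
      ∑ s : Sym σ n, coeff (Multiset.toFinsupp (s : Multiset σ)) f * monomialValues u n s := by
  rw [eval_eq']
  symm
  refine Finset.sum_bij_ne_zero (fun s _ _ => Multiset.toFinsupp (s : Multiset σ)) ?_ ?_ ?_ ?_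
  · intro s _ hs
    exact mem_support_iff.mpr (left_ne_zero_of_mul hs)
  · intro s _ _ s' _ _ h
    exact Sym.coe_injective (Multiset.toFinsupp.injective h)
  · intro e he hne
    have hdeg : Multiset.card (Finsupp.toMultiset e) = n := by
      rw [Finsupp.card_toMultiset, ← hf (mem_support_iff.mp he), Finsupp.weight_apply]
      simp [Finsupp.sum]
    exact ⟨⟨_, hdeg⟩, Finset.mem_univ _,
      by simpa [monomialValues, Finsupp.count_toMultiset] using hne, by simp⟩
  · intro s _ _
    rfl

theorem coeffMatrix_mulVec_monomialValues {p : ι → MvPolynomial σ R} {n : ℕ}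
    (hp : ∀ T, (p T).IsHomogeneous n) (u : σ → R) :
    coeffMatrix p n *ᵥ monomialValues u n = fun T => eval u (p T) := by
  funext T
  exact ((hp T).eval_eq_sum_sym u).symm

variable [Fintype ι] [DecidableEq ι]

theorem eq_zero_of_forall_eval_eq_zero [NoZeroDivisors R] {p : ι → MvPolynomial σ R} {n : ℕ}
    (hp : ∀ T, (p T).IsHomogeneous n) (e : ι ≃ Sym σ n)
    (hdet : ((coeffMatrix p n).submatrix id e).det ≠ 0) {u : σ → R}
    (hu : ∀ T, eval u (p T) = 0) : u = 0 := by
  have hmon : monomialValues u n ∘ e = 0 := by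
    refine eq_zero_of_mulVec_eq_zero hdet ?_
    rw [submatrix_mulVec_equiv, Function.comp_assoc, e.self_comp_symm, Function.comp_id,
      Function.comp_id, coeffMatrix_mulVec_monomialValues hp]
    exact _root_.funext hu
  funext i
  have := congrFun hmon (e.symm (Sym.replicate n i))
  simp only [Function.comp_apply, monomialValues, Equiv.apply_symm_apply, Pi.zero_apply,
    Sym.coe_replicate, Multiset.count_replicate, pow_ite, pow_zero, Fintype.prod_ite_eq] at this
  exact eq_zero_of_pow_eq_zero this

theorem det_coeffMatrix_ne_zero_of_det_eval_ne_zero {p : ι → MvPolynomial σ R} {n : ℕ}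
    (hp : ∀ T, (p T).IsHomogeneous n) (e : ι ≃ Sym σ n) (w : ι → σ → R)
    (hw : (Matrix.of fun T T' => eval (w T') (p T)).det ≠ 0) :
    ((coeffMatrix p n).submatrix id e).det ≠ 0 := by
  have hfac : (Matrix.of fun T T' => eval (w T') (p T)) =
      (coeffMatrix p n).submatrix id e * Matrix.of fun T T' => monomialValues (w T') n (e T) := by
    ext T T'
    rw [of_apply, ← congrFun (coeffMatrix_mulVec_monomialValues hp (w T')) T, mul_apply, mulVec,
      dotProduct]
    exact (e.sum_comp _).symm
  rw [hfac, det_mul] at hw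
  exact left_ne_zero_of_mul hw

end MvPolynomial

namespace AffinePhaseRetrieval

open MvPolynomial

variable {R : Type*} [CommRing R]

abbrev CardSubset (n q : ℕ) := {T : Finset (Fin n) // T.card = q}

section Minors

variable {σ : Type*} [Fintype σ] {n q : ℕ}

def minorPoly (G : Fin n → Matrix σ (Fin q) R) (T : CardSubset n q) : MvPolynomial σ R :=
  (Matrix.of fun a => (X : σ → MvPolynomial σ R) ᵥ* (G (T.1.orderEmbOfFin T.2 a)).map C).det

theorem eval_minorPoly (G : Fin n → Matrix σ (Fin q) R) (T : CardSubset n q) (u : σ → R) :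
    eval u (minorPoly G T) = (Matrix.of fun a => u ᵥ* G (T.1.orderEmbOfFin T.2 a)).det := by
  rw [minorPoly, RingHom.map_det]
  congr 1
  ext a k
  simp [vecMul, dotProduct]

theorem map_minorPoly {S : Type*} [CommRing S] (φ : R →+* S) (G : Fin n → Matrix σ (Fin q) R)
    (T : CardSubset n q) : map φ (minorPoly G T) = minorPoly (fun j => (G j).map φ) T := by
  rw [minorPoly, minorPoly, RingHom.map_det]
  congr 1
  ext a k
  simp [vecMul, dotProduct]

theorem isHomogeneous_minorPoly (G : Fin n → Matrix σ (Fin q) R) (T : CardSubset n q) :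
    (minorPoly G T).IsHomogeneous q := by
  have h := isHomogeneous_det (k := 1) (A := Matrix.of fun a =>
      (X : σ → MvPolynomial σ R) ᵥ* (G (T.1.orderEmbOfFin T.2 a)).map C) fun a k =>
    IsHomogeneous.sum _ _ _ fun i _ => (isHomogeneous_X R i).mul (isHomogeneous_C σ _)
  rwa [Fintype.card_fin, mul_one] at h

end Minors

variable {d r : ℕ}

def gram (M : Matrix (Fin d) (Fin r) R) (b : Fin r → R) : Matrix (Fin d) (Fin (d + 1)) R :=
  Matrix.of fun i => Fin.snoc (α := fun _ => R) ((M * Mᵀ) i) (2 * (M *ᵥ b) i)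

theorem gram_mulVec_snoc (M : Matrix (Fin d) (Fin r) R) (b : Fin r → R) (v : Fin d → R) :
    gram M b *ᵥ Fin.snoc v 1 = M *ᵥ (Mᵀ *ᵥ v + (2 : R) • b) := by
  rw [mulVec_add, mulVec_mulVec, mulVec_smul]
  ext i
  simp [gram, mulVec, dotProduct, Fin.sum_univ_castSucc]

theorem sum_sq_sub_sum_sq (M : Matrix (Fin d) (Fin r) R) (b : Fin r → R) (x y : Fin d → R) :
    ∑ s, (Mᵀ *ᵥ x + b) s ^ 2 - ∑ s, (Mᵀ *ᵥ y + b) s ^ 2 =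
      (x - y) ⬝ᵥ (gram M b *ᵥ Fin.snoc (x + y) 1) := by
  rw [gram_mulVec_snoc, dotProduct_mulVec, ← mulVec_transpose, mulVec_sub, mulVec_add,
    dotProduct, ← Finset.sum_sub_distrib]
  refine Finset.sum_congr rfl fun s _ => ?_
  simp only [Pi.add_apply, Pi.sub_apply, Pi.smul_apply, smul_eq_mul]
  ring

theorem map_gram {S : Type*} [CommRing S] (φ : R →+* S) (M : Matrix (Fin d) (Fin r) R)
    (b : Fin r → R) : (gram M b).map φ = gram (M.map φ) (φ ∘ b) := by
  ext i k
  refine Fin.lastCases ?_ (fun k => ?_) k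
  · simp [gram, RingHom.map_mulVec, map_ofNat φ 2]
  · simp [gram, ← transpose_map, ← Matrix.map_mul]

-- Any bijection will do: it only affects the sign of `certificate`.
variable (d) in
def cardSubsetEquivSym : CardSubset (2 * d) (d + 1) ≃ Sym (Fin d) (d + 1) :=
  Fintype.equivOfCardEq <| by
    rw [Fintype.card_finset_len, Sym.card_sym_eq_multichoose, Nat.multichoose_eq,
      Fintype.card_fin, Fintype.card_fin, two_mul, Nat.add_succ_sub_one]

def certificate (G : Fin (2 * d) → Matrix (Fin d) (Fin (d + 1)) R) : R :=
  ((coeffMatrix (minorPoly G) (d + 1)).submatrix id (cardSubsetEquivSym d)).det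

theorem map_certificate {S : Type*} [CommRing S] (φ : R →+* S)
    (G : Fin (2 * d) → Matrix (Fin d) (Fin (d + 1)) R) :
    φ (certificate G) = certificate fun j => (G j).map φ := by
  rw [certificate, certificate, RingHom.map_det]
  congr 1
  ext T s
  simp [coeffMatrix, ← map_minorPoly, coeff_map]

theorem injective_of_certificate_ne_zero [IsDomain R]
    (M : Fin (2 * d) → Matrix (Fin d) (Fin r) R) (b : Fin (2 * d) → Fin r → R)
    (h : certificate (fun j => gram (M j) (b j)) ≠ 0) :
    Function.Injective fun (x : Fin d → R) (j : Fin (2 * d)) =>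
      ∑ s, ((M j)ᵀ *ᵥ x + b j) s ^ 2 := by
  intro x y hxy
  rw [← sub_eq_zero]
  refine eq_zero_of_forall_eval_eq_zero (isHomogeneous_minorPoly _) _ h fun T => ?_
  rw [eval_minorPoly, ← exists_mulVec_eq_zero_iff]
  refine ⟨(Fin.snoc (x + y) 1 : Fin (d + 1) → R),
    fun h0 => (one_ne_zero : (1 : R) ≠ 0) (by simpa using congrFun h0 (Fin.last d)), ?_⟩
  ext a
  change ((x - y) ᵥ* gram _ _) ⬝ᵥ _ = 0
  rw [← dotProduct_mulVec, ← sum_sq_sub_sum_sq, sub_eq_zero]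
  exact congrFun hxy _

variable (d r) in
abbrev Coord (n : ℕ) := Fin n × ((Fin d × Fin r) ⊕ Fin r)

def coords {n : ℕ} (M : Fin n → Matrix (Fin d) (Fin r) R) (b : Fin n → Fin r → R) :
    Coord d r n → R :=
  fun p => Sum.elim (fun ij => M p.1 ij.1 ij.2) (fun s => b p.1 s) p.2

variable (R d r) in
def genericCertificate : MvPolynomial (Coord d r (2 * d)) R :=
  certificate fun j => gram (Matrix.of fun i s => X (j, Sum.inl (i, s))) fun s => X (j, Sum.inr s)

theorem eval_genericCertificate (M : Fin (2 * d) → Matrix (Fin d) (Fin r) R)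
    (b : Fin (2 * d) → Fin r → R) :
    eval (coords M b) (genericCertificate R d r) = certificate fun j => gram (M j) (b j) := by
  rw [genericCertificate, map_certificate]
  congr 1
  funext j
  rw [map_gram]
  congr 1
  · ext i s
    simp [coords]
  · ext s
    simp [coords]

def powerForm (z : R) : MvPolynomial (Fin d) R :=
  ∑ i : Fin d, C (z ^ (i : ℕ)) * X i

theorem minorPoly_hankel {n : ℕ} (t : Fin n → R) (T : CardSubset n (d + 1)) :
    minorPoly (fun j => Matrix.of fun (i : Fin d) (k : Fin (d + 1)) => t j ^ (i + k : ℕ)) T =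
      (∏ j ∈ T.1, powerForm (t j)) *
        C (vandermonde fun a => t (T.1.orderEmbOfFin T.2 a)).det := by
  have hrow : ∀ (z : R) (k : Fin (d + 1)),
      ((X : Fin d → MvPolynomial (Fin d) R) ᵥ*
        (Matrix.of fun (i : Fin d) (k : Fin (d + 1)) => z ^ (i + k : ℕ)).map C) k =
        powerForm z * C (z ^ (k : ℕ)) := by
    intro z k
    simp only [vecMul, dotProduct, powerForm, Finset.sum_mul, map_apply, of_apply, pow_add,
      map_mul]
    exact Finset.sum_congr rfl fun i _ => by ring
  set e := T.1.orderEmbOfFin T.2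
  have hmat : (Matrix.of fun a => (X : Fin d → MvPolynomial (Fin d) R) ᵥ*
      (Matrix.of fun (i : Fin d) (k : Fin (d + 1)) => t (e a) ^ (i + k : ℕ)).map C) =
      Matrix.of fun a k => powerForm (t (e a)) * (vandermonde fun a => t (e a)).map C a k := by
    ext a k
    simp [hrow]
  rw [minorPoly, hmat, det_mul_column, RingHom.map_det,
    ← Finset.map_orderEmbOfFin_univ T.1 T.2, Finset.prod_map]
  rfl

theorem eval_powerForm (q : Polynomial R) (hq : q.natDegree < d) (z : R) :
    eval (fun i : Fin d => q.coeff i) (powerForm z) = q.eval z := by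
  rw [Polynomial.eval_eq_sum_range' hq, ← Fin.sum_univ_eq_sum_range]
  simp [powerForm, mul_comm]

theorem certificate_hankel_ne_zero [IsDomain R] {t : Fin (2 * d) → R}
    (ht : Function.Injective t) :
    certificate (fun j => Matrix.of fun (i : Fin d) (k : Fin (d + 1)) => t j ^ (i + k : ℕ)) ≠ 0 := by
  classical
  let vanishing (T : CardSubset (2 * d) (d + 1)) : Polynomial R :=
    ∏ k ∈ T.1ᶜ, (Polynomial.X - Polynomial.C (t k))
  have hdeg : ∀ T, (vanishing T).natDegree < d := by
    intro T
    have := T.1.card_le_univ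
    rw [Polynomial.natDegree_finsetProd_X_sub_C_eq_card, Finset.card_compl, T.2]
    simp only [Fintype.card_fin] at this ⊢
    omega
  let diag (T : CardSubset (2 * d) (d + 1)) : R :=
    (∏ j ∈ T.1, ∏ k ∈ T.1ᶜ, (t j - t k)) *
      (vandermonde fun a => t (T.1.orderEmbOfFin T.2 a)).det
  have hdiag : (Matrix.of fun T T' => eval (fun i : Fin d => (vanishing T').coeff i)
      (minorPoly (fun j => Matrix.of fun (i : Fin d) (k : Fin (d + 1)) => t j ^ (i + k : ℕ)) T)) =
      diagonal diag := by
    ext T T'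
    rw [of_apply, minorPoly_hankel, map_mul, eval_C, map_prod]
    simp_rw [eval_powerForm _ (hdeg T'), vanishing, Polynomial.eval_prod, Polynomial.eval_sub,
      Polynomial.eval_X, Polynomial.eval_C]
    by_cases hT : T = T'
    · subst hT
      rw [diagonal_apply_eq]
    · rw [diagonal_apply_ne _ hT]
      obtain ⟨j, hj, hj'⟩ : ∃ j ∈ T.1, j ∉ T'.1 := by
        by_contra! h
        exact hT (Subtype.ext (Finset.eq_of_subset_of_card_le h (T'.2.trans T.2.symm).le))
      rw [Finset.prod_eq_zero hj (Finset.prod_eq_zero (Finset.mem_compl.2 hj') (sub_self _)),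
        zero_mul]
  refine det_coeffMatrix_ne_zero_of_det_eval_ne_zero (isHomogeneous_minorPoly _) _
    (fun T' (i : Fin d) => (vanishing T').coeff i) ?_
  rw [hdiag, det_diagonal, Finset.prod_ne_zero_iff]
  intro T _
  refine mul_ne_zero (Finset.prod_ne_zero_iff.2 fun j hj => Finset.prod_ne_zero_iff.2 fun k hk =>
    sub_ne_zero.2 fun h => Finset.mem_compl.1 hk (ht h ▸ hj)) ?_
  exact det_vandermonde_ne_zero_iff.2 (ht.comp (T.1.orderEmbOfFin T.2).injective)

theorem genericCertificate_ne_zero {K : Type*} [Field K] [CharZero K] (hr : 0 < r) :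
    genericCertificate K d r ≠ 0 := by
  intro h0
  let s₀ : Fin r := ⟨0, hr⟩
  let t : Fin (2 * d) → K := fun j => (j : ℕ)
  let M (j : Fin (2 * d)) : Matrix (Fin d) (Fin r) K :=
    Matrix.of fun i s => if s = s₀ then t j ^ (i : ℕ) else 0
  let b (j : Fin (2 * d)) : Fin r → K := Pi.single s₀ (t j ^ d / 2)
  have hgram : (fun j => gram (M j) (b j)) =
      fun j => Matrix.of fun (i : Fin d) (k : Fin (d + 1)) => t j ^ (i + k : ℕ) := by
    funext j
    ext i k
    refine Fin.lastCases ?_ (fun k => ?_) k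
    · simp only [gram, mulVec, dotProduct, of_apply, ite_mul, zero_mul, Finset.sum_ite_eq',
        Finset.mem_univ, ↓reduceIte, Pi.single_eq_same, Fin.snoc_last, Fin.val_last, M, b]
      ring
    · simp only [gram, of_apply, Fin.snoc_castSucc, mul_apply, transpose_apply, mul_ite, ite_mul,
        zero_mul, mul_zero, Finset.sum_ite_eq', Finset.mem_univ, ↓reduceIte, Fin.val_castSucc, M]
      ring
  refine certificate_hankel_ne_zero (t := t) (fun i j h => Fin.ext (Nat.cast_injective h)) ?_
  rw [← hgram, ← eval_genericCertificate, h0, map_zero]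

end AffinePhaseRetrieval

end

open AffinePhaseRetrieval MvPolynomial in
theorem gapr_generic_real_general
    (r d m : ℕ) (hr : 1 ≤ r) (hm : 2 * d ≤ m) :
    ∃ P : MvPolynomial (Fin m × ((Fin d × Fin r) ⊕ Fin r)) ℝ, P ≠ 0 ∧
      ∀ (M : Fin m → Matrix (Fin d) (Fin r) ℝ) (b : Fin m → Fin r → ℝ),
        MvPolynomial.eval
          (fun p : Fin m × ((Fin d × Fin r) ⊕ Fin r) =>
            Sum.elim (fun ij : Fin d × Fin r => M p.1 ij.1 ij.2)
              (fun i : Fin r => b p.1 i) p.2) P ≠ 0 →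
        Function.Injective (fun x : Fin d → ℝ => fun j : Fin m =>
          ∑ i : Fin r, ((M j)ᵀ.mulVec x + b j) i ^ 2) := by
  let ι : Fin (2 * d) → Fin m := Fin.castLE hm
  refine ⟨rename (Prod.map ι id) (genericCertificate ℝ d r), ?_, fun M b hP => ?_⟩
  · rw [Ne, map_eq_zero_iff _
      (rename_injective _ ((Fin.castLE_injective hm).prodMap Function.injective_id))]
    exact genericCertificate_ne_zero hr
  · rw [eval_rename] at hP
    have hinj := injective_of_certificate_ne_zero (M ∘ ι) (b ∘ ι) (by
      rwa [← eval_genericCertificate])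
    intro x y hxy
    exact hinj (funext fun j => congrFun hxy (ι j))

/-- If `m ≥ 2d`, there is a nonzero real polynomial `P` in the
`m(dr + r)` coordinates of a tuple `((M_1,b_1),…,(M_m,b_m))` such that every tuple
at which `P` does not vanish has the generalized affine phase retrieval property
for ℝ^d (so a generic tuple does). -/
theorem gapr_generic_real
    (r d m : ℕ) (hr : 1 ≤ r) (hd : 1 ≤ d) (hm : 2 * d ≤ m) :
    ∃ P : MvPolynomial (Fin m × ((Fin d × Fin r) ⊕ Fin r)) ℝ, P ≠ 0 ∧
      ∀ (M : Fin m → Matrix (Fin d) (Fin r) ℝ) (b : Fin m → Fin r → ℝ),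
        MvPolynomial.eval
          (fun p : Fin m × ((Fin d × Fin r) ⊕ Fin r) =>
            Sum.elim (fun ij : Fin d × Fin r => M p.1 ij.1 ij.2)
              (fun i : Fin r => b p.1 i) p.2) P ≠ 0 →
        Function.Injective (fun x : Fin d → ℝ => fun j : Fin m =>
          ∑ i : Fin r, ((M j)ᵀ.mulVec x + b j) i ^ 2) :=
  gapr_generic_real_general r d m hr hm
end

section
/- Let r, d, m ≥ 1 and let A = {(M_j, b_j)}_{j=1}^m with M_j ∈ ℝ^{d×r} and b_j ∈ ℝ^r. For each j define the (d+1)×(d+1) real symmetric matrix A_j with block form A_j = [[M_j M_jᵀ, M_j b_j], [(M_j b_j)ᵀ, b_jᵀ b_j]]. Then A does NOT have the generalized affine phase retrieval property for ℝ^d if and only if there exists a matrix Q ∈ ℝ^{(d+1)×(d+1)} satisfying: Qᵀ = Q, Q_{d+1,d+1} = 0, rank(Q) ≤ 2, tr(A_jᵀ Q) = 0 for all j = 1, …, m, and Q_{1,d+1}² + Q_{2,d+1}² + ⋯ + Q_{d,d+1}² = 1. -/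
open Matrix

/-- The `(d+1)×(d+1)` real symmetric matrix
`A = [[M Mᵀ, M b], [(M b)ᵀ, bᵀ b]]` associated with `(M, b) ∈ ℝ^{d×r} × ℝ^r`. -/
def affineMeasMatrixR (d r : ℕ) (M : Matrix (Fin d) (Fin r) ℝ) (b : Fin r → ℝ) :
    Matrix (Fin (d + 1)) (Fin (d + 1)) ℝ :=
  Matrix.of fun i k =>
    if hi : (i : ℕ) < d then
      if hk : (k : ℕ) < d then (M * Mᵀ) ⟨i, hi⟩ ⟨k, hk⟩
      else M.mulVec b ⟨i, hi⟩
    else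
      if hk : (k : ℕ) < d then M.mulVec b ⟨k, hk⟩
      else b ⬝ᵥ b

/-!
Lifting `x ↦ x̂ = (x, 1)` turns the `j`-th measurement into the quadratic form `x̂ᵀ A_j x̂`, so
two points `x ≠ y` with equal measurements give `Q = (x̂ x̂ᵀ - ŷ ŷᵀ) / ‖x - y‖`, which is
orthogonal to every `A_j`. Conversely, let `Q` be symmetric of rank at most two whose last
column `q` is nonzero and vanishes in the last coordinate. Its range is spanned by `q` and a
column normalised to `1` in the last coordinate, and symmetry then forces `Q = q aᵀ + a qᵀ` with
`a_{d+1} = 1`. Hence `Q = u uᵀ - v vᵀ` for `u = a + q/2`, `v = a - q/2`, and `u = x̂`, `v = ŷ`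
for two distinct points with equal measurements.
-/

namespace Matrix

variable {m n K : Type*} [Fintype n]

theorem rank_vecMulVec_sub_vecMulVec_le [Fintype m] [CommRing K] [StrongRankCondition K]
    (u v : m → K) (w z : n → K) : (vecMulVec u w - vecMulVec v z).rank ≤ 2 := by
  have : vecMulVec u w - vecMulVec v z = of (fun i => ![u i, v i]) * of ![w, -z] := by
    ext i j
    simp [mul_apply, Fin.sum_univ_two, vecMulVec_apply, sub_eq_add_neg]
  rw [this]
  exact (rank_mul_le_left _ _).trans ((rank_le_card_width _).trans (Fintype.card_fin 2).le)

theorem exists_eq_vecMulVec_add_vecMulVec_of_range_le_span_pair [CommRing K] [DecidableEq n]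
    {Q : Matrix m n K} {q p : m → K}
    (h : LinearMap.range Q.mulVecLin ≤ Submodule.span K {q, p}) :
    ∃ α β : n → K, Q = vecMulVec q α + vecMulVec p β := by
  have hcol (j : n) : ∃ a b : K, a • q + b • p = Q.col j :=
    Submodule.mem_span_pair.mp (h ⟨Pi.single j 1, mulVec_single_one Q j⟩)
  choose α β hαβ using hcol
  refine ⟨α, β, ?_⟩
  ext i j
  simpa [vecMulVec_apply, mul_comm] using (congrFun (hαβ j) i).symm

theorem range_mulVecLin_eq_span_pair [Fintype m] [Field K] {Q : Matrix m n K} (hrank : Q.rank ≤ 2)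
    {q p : m → K} (hq : q ∈ LinearMap.range Q.mulVecLin) (hp : p ∈ LinearMap.range Q.mulVecLin)
    (hqp : LinearIndependent K ![q, p]) :
    LinearMap.range Q.mulVecLin = Submodule.span K {q, p} := by
  refine (Submodule.eq_of_le_of_finrank_le (Submodule.span_le.mpr ?_) ?_).symm
  · rintro w (rfl | rfl) <;> assumption
  · rw [← range_cons_cons_empty q p ![], finrank_span_eq_card hqp, Fintype.card_fin]
    exact hrank

theorem IsSymm.exists_eq_vecMulVec_col_add_vecMulVec [Field K] [NeZero (2 : K)] [DecidableEq n]
    {Q : Matrix n n K} (hQ : Q.IsSymm) (hrank : Q.rank ≤ 2) {k : n} (hkk : Q k k = 0)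
    (hk : Q.col k ≠ 0) :
    ∃ a : n → K, a k = 1 ∧ Q = vecMulVec (Q.col k) a + vecMulVec a (Q.col k) := by
  obtain ⟨j, hj⟩ := Function.ne_iff.mp hk
  have hqk : Q.col k k = 0 := hkk
  -- `Q k j = Q j k ≠ 0`, so column `j` can be normalised to `1` at `k`
  set p := (Q k j)⁻¹ • Q.col j
  have hpk : p k = 1 := inv_mul_cancel₀ (by rwa [hQ.apply])
  have hcol_mem (i : n) : Q.col i ∈ LinearMap.range Q.mulVecLin :=
    ⟨Pi.single i 1, mulVec_single_one Q i⟩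
  have hind : LinearIndependent K ![Q.col k, p] :=
    (LinearIndependent.pair_iff' hk).mpr fun c hc => by simpa [hkk, hpk] using congrFun hc k
  obtain ⟨α, β, hαβ⟩ : ∃ α β : n → K, Q = vecMulVec (Q.col k) α + vecMulVec p β :=
    exists_eq_vecMulVec_add_vecMulVec_of_range_le_span_pair
      (range_mulVecLin_eq_span_pair hrank (hcol_mem k)
        (Submodule.smul_mem _ _ (hcol_mem j)) hind).le
  -- row `k` of the decomposition, where `Q.col k` vanishes and `p` is `1`
  have hβ (l : n) : β l = Q.col k l := by
    have := congrFun (congrFun hαβ k) l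
    simp only [add_apply, vecMulVec_apply, hqk, hpk, zero_mul, one_mul, zero_add] at this
    rw [col_apply, ← hQ.apply, this]
  have hαk : α k = 1 := by
    have := congrFun (congrFun hαβ j) k
    simp only [add_apply, vecMulVec_apply, hβ, hqk, mul_zero, add_zero] at this
    exact (mul_eq_left₀ hj).mp this.symm
  refine ⟨(2 : K)⁻¹ • (α + p), ?_, ?_⟩
  · simp only [Pi.smul_apply, Pi.add_apply, hαk, hpk, smul_eq_mul, one_add_one_eq_two]
    exact inv_mul_cancel₀ two_ne_zero
  -- average the decomposition with its transpose
  ext i l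
  have h1 := congrFun (congrFun hαβ i) l
  have h2 := congrFun (congrFun hαβ l) i
  rw [hQ.apply] at h2
  simp only [add_apply, vecMulVec_apply, hβ, Pi.smul_apply, Pi.add_apply, smul_eq_mul] at h1 h2 ⊢
  field_simp
  linear_combination h1 + h2

theorem IsSymm.exists_eq_vecMulVec_sub_vecMulVec [Field K] [NeZero (2 : K)] [DecidableEq n]
    {Q : Matrix n n K} (hQ : Q.IsSymm) (hrank : Q.rank ≤ 2) {k : n} (hkk : Q k k = 0)
    (hk : Q.col k ≠ 0) :
    ∃ u v : n → K, u k = 1 ∧ v k = 1 ∧ Q = vecMulVec u u - vecMulVec v v := by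
  obtain ⟨a, hak, hQa⟩ := hQ.exists_eq_vecMulVec_col_add_vecMulVec hrank hkk hk
  refine ⟨a + (2 : K)⁻¹ • Q.col k, a - (2 : K)⁻¹ • Q.col k, by simp [hak, hkk],
    by simp [hak, hkk], ?_⟩
  conv_lhs => rw [hQa]
  ext i l
  simp only [add_apply, sub_apply, vecMulVec_apply, Pi.add_apply, Pi.sub_apply, Pi.smul_apply,
    smul_eq_mul]
  field_simp
  ring

theorem trace_transpose_mul_vecMulVec_self [CommSemiring K] (A : Matrix n n K) (u : n → K) :
    (Aᵀ * vecMulVec u u).trace = u ⬝ᵥ A *ᵥ u := by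
  simp [mul_vecMulVec, mulVec_transpose, dotProduct_comm, dotProduct_mulVec]

end Matrix

theorem sum_sq_inv_sqrt_sum_sq_mul {ι : Type*} [Fintype ι] {w : ι → ℝ} (hw : w ≠ 0) :
    ∑ i, ((√(∑ j, w j ^ 2))⁻¹ * w i) ^ 2 = 1 := by
  have hpos : 0 < ∑ j, w j ^ 2 := by
    obtain ⟨i, hi⟩ := Function.ne_iff.mp hw
    exact Finset.sum_pos' (fun j _ => sq_nonneg (w j)) ⟨i, Finset.mem_univ i, sq_pos_of_ne_zero hi⟩
  simp_rw [mul_pow, inv_pow, Real.sq_sqrt hpos.le, ← Finset.mul_sum, inv_mul_cancel₀ hpos.ne']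

section Affine

variable {d r : ℕ}

def affineLift {R : Type*} (M : Matrix (Fin d) (Fin r) R) (b : Fin r → R) :
    Matrix (Fin (d + 1)) (Fin r) R :=
  of fun i l => Fin.snoc (α := fun _ => R) (fun i => M i l) (b l) i

theorem affineLift_transpose_mulVec_snoc_one {R : Type*} [CommSemiring R]
    (M : Matrix (Fin d) (Fin r) R) (b : Fin r → R) (x : Fin d → R) :
    (affineLift M b)ᵀ *ᵥ Fin.snoc x 1 = Mᵀ *ᵥ x + b := by
  ext l
  simp [affineLift, mulVec, dotProduct, Fin.sum_univ_castSucc, mul_comm]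

theorem affineMeasMatrixR_eq_affineLift_mul_transpose (M : Matrix (Fin d) (Fin r) ℝ)
    (b : Fin r → ℝ) : affineMeasMatrixR d r M b = affineLift M b * (affineLift M b)ᵀ := by
  ext i k
  induction i using Fin.lastCases <;> induction k using Fin.lastCases <;>
    simp [affineMeasMatrixR, affineLift, mul_apply, mulVec, dotProduct, mul_comm]

theorem trace_transpose_affineMeasMatrixR_mul_vecMulVec_snoc_one (M : Matrix (Fin d) (Fin r) ℝ)
    (b : Fin r → ℝ) (x : Fin d → ℝ) :
    ((affineMeasMatrixR d r M b)ᵀ * vecMulVec (Fin.snoc x 1) (Fin.snoc x 1)).trace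
      = ∑ i, (Mᵀ *ᵥ x + b) i ^ 2 := by
  rw [trace_transpose_mul_vecMulVec_self, affineMeasMatrixR_eq_affineLift_mul_transpose,
    ← mulVec_mulVec, dotProduct_mulVec, ← mulVec_transpose, affineLift_transpose_mulVec_snoc_one]
  simp [dotProduct, sq]

theorem trace_transpose_affineMeasMatrixR_mul_vecMulVec_sub (M : Matrix (Fin d) (Fin r) ℝ)
    (b : Fin r → ℝ) (x y : Fin d → ℝ) :
    ((affineMeasMatrixR d r M b)ᵀ * (vecMulVec (Fin.snoc x 1) (Fin.snoc x 1)
      - vecMulVec (Fin.snoc y 1) (Fin.snoc y 1))).trace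
      = ∑ i, (Mᵀ *ᵥ x + b) i ^ 2 - ∑ i, (Mᵀ *ᵥ y + b) i ^ 2 := by
  rw [Matrix.mul_sub, trace_sub, trace_transpose_affineMeasMatrixR_mul_vecMulVec_snoc_one,
    trace_transpose_affineMeasMatrixR_mul_vecMulVec_snoc_one]

end Affine

theorem gapr_fail_iff_exists_Q_real_general
    (r d m : ℕ)
    (M : Fin m → Matrix (Fin d) (Fin r) ℝ) (b : Fin m → Fin r → ℝ) :
    ¬ Function.Injective (fun x : Fin d → ℝ => fun j : Fin m =>
        ∑ i : Fin r, ((M j)ᵀ.mulVec x + b j) i ^ 2)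
    ↔ ∃ Q : Matrix (Fin (d + 1)) (Fin (d + 1)) ℝ,
        Qᵀ = Q ∧
        Q (Fin.last d) (Fin.last d) = 0 ∧
        Q.rank ≤ 2 ∧
        (∀ j : Fin m, ((affineMeasMatrixR d r (M j) (b j))ᵀ * Q).trace = 0) ∧
        ∑ i : Fin d, Q i.castSucc (Fin.last d) ^ 2 = 1 := by
  rw [Function.not_injective_iff]
  constructor
  · rintro ⟨x, y, hxy, hne⟩
    refine ⟨(√(∑ i, (x - y) i ^ 2))⁻¹ • (vecMulVec (Fin.snoc x 1) (Fin.snoc x 1)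
      - vecMulVec (Fin.snoc y 1) (Fin.snoc y 1)), ?_, ?_, ?_, fun j => ?_, ?_⟩
    · simp [transpose_vecMulVec]
    · simp [vecMulVec_apply]
    · rw [smul_sub, ← vecMulVec_smul, ← vecMulVec_smul]
      exact rank_vecMulVec_sub_vecMulVec_le _ _ _ _
    · rw [Matrix.mul_smul, trace_smul, trace_transpose_affineMeasMatrixR_mul_vecMulVec_sub,
        congrFun hxy j, sub_self, smul_zero]
    · simpa [vecMulVec_apply] using sum_sq_inv_sqrt_sum_sq_mul (sub_ne_zero.mpr hne)
  · rintro ⟨Q, hsym, hlast, hrank, htr, hnorm⟩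
    have hcol : Q.col (Fin.last d) ≠ 0 := by
      rintro h
      simp [← col_apply, h] at hnorm
    obtain ⟨u, v, hu, hv, rfl⟩ :=
      IsSymm.exists_eq_vecMulVec_sub_vecMulVec hsym hrank hlast hcol
    have hu' : Fin.snoc (Fin.init u) 1 = u := hu ▸ Fin.snoc_init_self u
    have hv' : Fin.snoc (Fin.init v) 1 = v := hv ▸ Fin.snoc_init_self v
    refine ⟨Fin.init u, Fin.init v, funext fun j => ?_, fun h => hcol ?_⟩
    · have := htr j
      rwa [← hu', ← hv', trace_transpose_affineMeasMatrixR_mul_vecMulVec_sub, sub_eq_zero]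
        at this
    · rw [← hu', ← hv', h, sub_self]
      rfl

/-- `A = {(M_j, b_j)}_{j=1}^m` fails the generalized affine phase
retrieval property for ℝ^d iff there exists `Q ∈ ℝ^{(d+1)×(d+1)}` with `Qᵀ = Q`,
`Q_{d+1,d+1} = 0`, `rank Q ≤ 2`, `tr(A_jᵀ Q) = 0` for all `j`, and
`Q_{1,d+1}² + ⋯ + Q_{d,d+1}² = 1`. -/
theorem gapr_fail_iff_exists_Q_real
    (r d m : ℕ) (hr : 1 ≤ r) (hd : 1 ≤ d) (hm : 1 ≤ m)
    (M : Fin m → Matrix (Fin d) (Fin r) ℝ) (b : Fin m → Fin r → ℝ) :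
    ¬ Function.Injective (fun x : Fin d → ℝ => fun j : Fin m =>
        ∑ i : Fin r, ((M j)ᵀ.mulVec x + b j) i ^ 2)
    ↔ ∃ Q : Matrix (Fin (d + 1)) (Fin (d + 1)) ℝ,
        Qᵀ = Q ∧
        Q (Fin.last d) (Fin.last d) = 0 ∧
        Q.rank ≤ 2 ∧
        (∀ j : Fin m, ((affineMeasMatrixR d r (M j) (b j))ᵀ * Q).trace = 0) ∧
        ∑ i : Fin d, Q i.castSucc (Fin.last d) ^ 2 = 1 :=
  gapr_fail_iff_exists_Q_real_general r d m M b
end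

section
/- Let r, d, m ≥ 1 and let A = {(M_j, b_j)}_{j=1}^m with M_j ∈ ℂ^{d×r} and b_j ∈ ℂ^r. Then the map M_A : ℂ^d → ℝ^m defined by M_A(x) = (‖M_1*x + b_1‖², …, ‖M_m*x + b_m‖²) is injective on ℂ^d if and only if for every u ∈ ℂ^d and every nonzero v ∈ ℂ^d there exists j with 1 ≤ j ≤ m such that Re(u* M_j M_j* v + (M_j b_j)* v) ≠ 0. -/
/-!
By polarization, `‖Mᴴ(u + v) + b‖² - ‖Mᴴ(u - v) + b‖² = 4 Re(u* M Mᴴ v + (M b)* v)`.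
Every pair `x ≠ y` is of the form `u ± v` with `v ≠ 0` (take `u = (x + y)/2`, `v = (x - y)/2`),
so injectivity of the measurement map says exactly that for each such `u, v` some measurement
separates `u + v` from `u - v`, i.e. that some of these real parts is nonzero.
-/

open Matrix

section Polarization

variable {𝕜 ι : Type*} [RCLike 𝕜] [Fintype ι]

theorem RCLike.norm_add_sq_sub_norm_sub_sq (w q : 𝕜) :
    ‖w + q‖ ^ 2 - ‖w - q‖ ^ 2 = 4 * RCLike.re (star w * q) := by
  have h := re_inner_eq_norm_add_mul_self_sub_norm_sub_mul_self_div_four (𝕜 := 𝕜) w q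
  rw [inner_apply] at h
  rw [RCLike.star_def, mul_comm (starRingEnd 𝕜 w), h]
  ring

theorem sum_norm_add_sq_sub_sum_norm_sub_sq (z q : ι → 𝕜) :
    ∑ i, ‖(z + q) i‖ ^ 2 - ∑ i, ‖(z - q) i‖ ^ 2 = 4 * RCLike.re (star z ⬝ᵥ q) := by
  simp only [← Finset.sum_sub_distrib, Pi.add_apply, Pi.sub_apply,
    RCLike.norm_add_sq_sub_norm_sub_sq, dotProduct, Pi.star_apply, map_sum, Finset.mul_sum]

end Polarization

section AffineMeasurement

variable {𝕜 n k : Type*} [RCLike 𝕜] [Fintype n] [Fintype k]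

theorem star_conjTranspose_mulVec_add_dotProduct (M : Matrix n k 𝕜) (b : k → 𝕜) (u v : n → 𝕜) :
    star (Mᴴ *ᵥ u + b) ⬝ᵥ Mᴴ *ᵥ v = star u ⬝ᵥ (M * Mᴴ) *ᵥ v + star (M *ᵥ b) ⬝ᵥ v := by
  rw [star_add, add_dotProduct, star_mulVec, conjTranspose_conjTranspose, ← dotProduct_mulVec,
    mulVec_mulVec, star_mulVec, ← dotProduct_mulVec]

theorem sum_norm_affine_add_sq_sub_sum_norm_affine_sub_sq (M : Matrix n k 𝕜) (b : k → 𝕜)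
    (u v : n → 𝕜) :
    ∑ i, ‖(Mᴴ *ᵥ (u + v) + b) i‖ ^ 2 - ∑ i, ‖(Mᴴ *ᵥ (u - v) + b) i‖ ^ 2
      = 4 * RCLike.re (star u ⬝ᵥ (M * Mᴴ) *ᵥ v + star (M *ᵥ b) ⬝ᵥ v) := by
  have hadd : Mᴴ *ᵥ (u + v) + b = (Mᴴ *ᵥ u + b) + Mᴴ *ᵥ v := by rw [mulVec_add]; abel
  have hsub : Mᴴ *ᵥ (u - v) + b = (Mᴴ *ᵥ u + b) - Mᴴ *ᵥ v := by rw [mulVec_sub]; abel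
  rw [hadd, hsub, sum_norm_add_sq_sub_sum_norm_sub_sq, star_conjTranspose_mulVec_add_dotProduct]

end AffineMeasurement

theorem Function.injective_iff_ne_add_sub {𝕜 E α : Type*} [Field 𝕜] [NeZero (2 : 𝕜)]
    [AddCommGroup E] [Module 𝕜 E] (F : E → α) :
    Function.Injective F ↔ ∀ u v : E, v ≠ 0 → F (u + v) ≠ F (u - v) := by
  refine ⟨fun hF u v hv huv => hv ?_, fun h x y hxy => by_contra fun hne => ?_⟩
  · have h2v : (2 : 𝕜) • v = 0 := by
      rw [two_smul, ← eq_neg_iff_add_eq_zero]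
      simpa [sub_eq_add_neg] using hF huv
    exact (smul_eq_zero.mp h2v).resolve_left two_ne_zero
  · refine h ((2⁻¹ : 𝕜) • (x + y)) ((2⁻¹ : 𝕜) • (x - y)) ?_ ?_
    · exact smul_ne_zero (inv_ne_zero two_ne_zero) (sub_ne_zero.mpr hne)
    · have h2 : (2 : 𝕜) ≠ 0 := two_ne_zero
      convert hxy using 2 <;> match_scalars <;> field_simp <;> ring

theorem gapr_iff_complex_general
    (r d m : ℕ)
    (M : Fin m → Matrix (Fin d) (Fin r) ℂ) (b : Fin m → Fin r → ℂ) :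
    Function.Injective (fun x : Fin d → ℂ => fun j : Fin m =>
      ∑ i : Fin r, ‖((M j)ᴴ.mulVec x + b j) i‖ ^ 2)
    ↔ ∀ u v : Fin d → ℂ, v ≠ 0 → ∃ j : Fin m,
        (star u ⬝ᵥ (M j * (M j)ᴴ).mulVec v
          + star ((M j).mulVec (b j)) ⬝ᵥ v).re ≠ 0 := by
  rw [Function.injective_iff_ne_add_sub (𝕜 := ℂ)]
  refine forall₂_congr fun u v => imp_congr_right fun _ => ?_
  rw [Function.ne_iff]
  refine exists_congr fun j => ?_
  rw [← sub_ne_zero, sum_norm_affine_add_sq_sub_sum_norm_affine_sub_sq]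
  exact mul_ne_zero_iff_left four_ne_zero

/-- The measurement map `M_A(x) = (‖M_j*x + b_j‖²)_{j=1}^m` is
injective on ℂ^d iff for all `u` and all nonzero `v` there is `j` with
`Re(u* M_j M_j* v + (M_j b_j)* v) ≠ 0`. -/
theorem gapr_iff_complex
    (r d m : ℕ) (hr : 1 ≤ r) (hd : 1 ≤ d) (hm : 1 ≤ m)
    (M : Fin m → Matrix (Fin d) (Fin r) ℂ) (b : Fin m → Fin r → ℂ) :
    Function.Injective (fun x : Fin d → ℂ => fun j : Fin m =>
      ∑ i : Fin r, ‖((M j)ᴴ.mulVec x + b j) i‖ ^ 2)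
    ↔ ∀ u v : Fin d → ℂ, v ≠ 0 → ∃ j : Fin m,
        (star u ⬝ᵥ (M j * (M j)ᴴ).mulVec v
          + star ((M j).mulVec (b j)) ⬝ᵥ v).re ≠ 0 :=
  gapr_iff_complex_general r d m M b
end

section
/- Let r, d, m ≥ 1 and let A = {(M_j, b_j)}_{j=1}^m with M_j ∈ ℂ^{d×r} and b_j ∈ ℂ^r. Viewing the map M_A(x) = (‖M_1*x + b_1‖², …, ‖M_m*x + b_m‖²) as a map from ℝ^{2d} to ℝ^m via the standard identification ℂ^d ≅ ℝ^{2d}, the following are equivalent: (a) M_A is injective on ℂ^d; (b) for every x ∈ ℝ^{2d}, the (Fréchet) derivative of M_A : ℝ^{2d} → ℝ^m at x is an injective linear map (equivalently, the real Jacobian of M_A has rank 2d at every point). -/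
open Matrix

/-!
Each coordinate of the measurement map is `y ↦ ‖A y + c‖²` with `A` real-linear, a quadratic map,
so the midpoint rule is exact for it: `f x - f y = Df((x + y) / 2) (x - y)`. A collision `f x = f y`
with `x ≠ y` thus yields the kernel vector `x - y` of the derivative at the midpoint, and
conversely a kernel vector `v` of the derivative at `z` yields the collision `f (z + v/2) = f (z - v/2)`.
-/

open Function

section Midpoint

variable {R E F : Type*} [Ring R] [Invertible (2 : R)] [AddCommGroup E] [Module R E]
  [AddCommGroup F] [Module R F]

theorem injective_iff_forall_injective_of_sub_eq_midpoint {f : E → F} (L : E → E →ₗ[R] F)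
    (hf : ∀ x y, f x - f y = L (midpoint R x y) (x - y)) :
    Injective f ↔ ∀ z, Injective (L z) := by
  constructor
  · intro hinj z
    refine (injective_iff_map_eq_zero _).2 fun v hv => ?_
    set w := ⅟(2 : R) • v
    have hmid : midpoint R (z + w) (z - w) = z := by
      rw [midpoint_eq_smul_add, add_add_sub_cancel, ← two_smul R z, smul_smul,
        invOf_mul_self, one_smul]
    have hsub : (z + w) - (z - w) = v := by
      rw [add_sub_sub_cancel, ← two_smul R, smul_smul, mul_invOf_self, one_smul]
    have := hf (z + w) (z - w)
    rw [hmid, hsub, hv, sub_eq_zero] at this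
    rw [← hsub, hinj this, sub_self]
  · intro hL x y hxy
    rw [← sub_eq_zero, ← (L (midpoint R x y)).map_eq_zero_iff (hL _), ← hf, hxy, sub_self]

end Midpoint

section SqNormAffine

variable {E G : Type*} [NormedAddCommGroup E] [NormedSpace ℝ E]
  [NormedAddCommGroup G] [InnerProductSpace ℝ G]

theorem sq_norm_map_add_sub_sq_norm_map_add (A : E →L[ℝ] G) (c : G) (x y : E) :
    ‖A x + c‖ ^ 2 - ‖A y + c‖ ^ 2
      = (2 • (innerSL ℝ (A (midpoint ℝ x y) + c)).comp A) (x - y) := by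
  set u := A x + c
  set v := A y + c
  have hmid : A (midpoint ℝ x y) + c = (2⁻¹ : ℝ) • (u + v) := by
    rw [midpoint_eq_smul_add, map_smul, map_add, invOf_eq_inv]; module
  have hsub : A (x - y) = u - v := by rw [map_sub, add_sub_add_right_eq_sub]
  rw [_root_.smul_apply, ContinuousLinearMap.comp_apply, innerSL_apply_apply, hmid, hsub,
    real_inner_smul_left, inner_add_left, inner_sub_right, inner_sub_right, real_inner_comm u v,
    real_inner_self_eq_norm_sq, real_inner_self_eq_norm_sq, nsmul_eq_mul]
  ring

theorem injective_iff_forall_injective_fderiv_sq_norm_affine {ι : Type*} [Fintype ι]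
    {G : ι → Type*} [∀ j, NormedAddCommGroup (G j)] [∀ j, InnerProductSpace ℝ (G j)]
    (A : ∀ j, E →L[ℝ] G j) (c : ∀ j, G j) :
    Injective (fun y j => ‖A j y + c j‖ ^ 2)
      ↔ ∀ z, Injective (fderiv ℝ (fun y j => ‖A j y + c j‖ ^ 2) z) := by
  have hderiv z : HasFDerivAt (fun y j => ‖A j y + c j‖ ^ 2)
      (.pi fun j => 2 • (innerSL ℝ (A j z + c j)).comp (A j)) z :=
    hasFDerivAt_pi.2 fun j => ((A j).hasFDerivAt.add_const (c j)).norm_sq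
  simp only [fun z => (hderiv z).fderiv]
  exact injective_iff_forall_injective_of_sub_eq_midpoint
    (fun z => (ContinuousLinearMap.pi fun j => 2 • (innerSL ℝ (A j z + c j)).comp (A j) :
      E →ₗ[ℝ] ∀ j, ℝ))
    fun x y => funext fun j => sq_norm_map_add_sub_sq_norm_map_add (A j) (c j) x y

end SqNormAffine

noncomputable def Matrix.mulVecEuclideanCLM {m n : Type*} [Fintype m] [Fintype n]
    (N : Matrix m n ℂ) : (n → ℂ) →L[ℝ] EuclideanSpace ℂ m :=
  (LinearMap.toContinuousLinearMap
    ((WithLp.linearEquiv 2 ℂ (m → ℂ)).symm.toLinearMap ∘ₗ N.mulVecLin)).restrictScalars ℝ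

theorem gapr_iff_jacobian_complex_general
    (r d m : ℕ)
    (M : Fin m → Matrix (Fin d) (Fin r) ℂ) (b : Fin m → Fin r → ℂ) :
    Function.Injective (fun x : Fin d → ℂ => fun j : Fin m =>
      ∑ i : Fin r, ‖((M j)ᴴ.mulVec x + b j) i‖ ^ 2)
    ↔ ∀ x : Fin d → ℂ,
        Function.Injective
          (fderiv ℝ (fun y : Fin d → ℂ => fun j : Fin m =>
            ∑ i : Fin r, ‖((M j)ᴴ.mulVec y + b j) i‖ ^ 2) x) := by
  have hf : (fun y : Fin d → ℂ => fun j : Fin m => ∑ i : Fin r, ‖((M j)ᴴ.mulVec y + b j) i‖ ^ 2)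
      = fun y j => ‖(M j)ᴴ.mulVecEuclideanCLM y + WithLp.toLp 2 (b j)‖ ^ 2 := by
    funext y j
    rw [EuclideanSpace.norm_sq_eq]
    rfl
  rw [hf]
  exact injective_iff_forall_injective_fderiv_sq_norm_affine _ _

/-- Viewing the measurement map `M_A(x) = (‖M_j*x + b_j‖²)_j` as a
real-differentiable map on `ℂ^d ≅ ℝ^{2d}`, it is injective iff its real Fréchet
derivative is injective at every point (i.e. the real Jacobian has rank `2d`
everywhere). -/
theorem gapr_iff_jacobian_complex
    (r d m : ℕ) (hr : 1 ≤ r) (hd : 1 ≤ d) (hm : 1 ≤ m)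
    (M : Fin m → Matrix (Fin d) (Fin r) ℂ) (b : Fin m → Fin r → ℂ) :
    Function.Injective (fun x : Fin d → ℂ => fun j : Fin m =>
      ∑ i : Fin r, ‖((M j)ᴴ.mulVec x + b j) i‖ ^ 2)
    ↔ ∀ x : Fin d → ℂ,
        Function.Injective
          (fderiv ℝ (fun y : Fin d → ℂ => fun j : Fin m =>
            ∑ i : Fin r, ‖((M j)ᴴ.mulVec y + b j) i‖ ^ 2) x) :=
  gapr_iff_jacobian_complex_general r d m M b
end

section
/- Let r, d ≥ 1 and let m ≥ 2d + ⌊d/r⌋ + ε_{d,r}, where ε_{d,r} = 0 if r divides d and ε_{d,r} = 1 otherwise. Then there exists a collection A = {(M_j, b_j)}_{j=1}^m with M_j ∈ ℂ^{d×r} and b_j ∈ ℂ^r which has the generalized affine phase retrieval property for ℂ^d. -/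
/-!
Cut `ℂ^d` into `⌈d/r⌉ = ⌊d/r⌋ + ε_{d,r}` consecutive blocks of `r` coordinates and let `P_t`
be the `d × r` matrix with `P_tᴴ x` the `t`-th block of `x`. If the coordinate `x_k` sits at
position `p` of block `t`, the three measurements `(P_t, 0)`, `(P_t, e_p)` and `(P_t, i e_p)`
return `‖P_tᴴ x‖²`, `‖P_tᴴ x‖² + 2 Re x_k + 1` and `‖P_tᴴ x‖² + 2 Im x_k + 1`, so they determine
`x_k`. This uses `2d` shifted measurements and one unshifted measurement per block.
-/

open Matrix

lemma Complex.sq_norm_add_one (z : ℂ) : ‖z + 1‖ ^ 2 = ‖z‖ ^ 2 + 2 * z.re + 1 := by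
  simp only [Complex.sq_norm, Complex.normSq_apply, Complex.add_re, Complex.add_im,
    Complex.one_re, Complex.one_im]
  ring

lemma Complex.sq_norm_add_I (z : ℂ) : ‖z + Complex.I‖ ^ 2 = ‖z‖ ^ 2 + 2 * z.im + 1 := by
  simp only [Complex.sq_norm, Complex.normSq_apply, Complex.add_re, Complex.add_im,
    Complex.I_re, Complex.I_im]
  ring

section SingleShift

variable {ι : Type*} [Fintype ι] [DecidableEq ι]

lemma sum_sq_norm_add_single {E : Type*} [SeminormedAddCommGroup E] (v : ι → E) (p : ι)
    (c : E) :
    ∑ i, ‖(v + Pi.single p c : ι → E) i‖ ^ 2 = ∑ i, ‖v i‖ ^ 2 - ‖v p‖ ^ 2 + ‖v p + c‖ ^ 2 := by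
  have hoff : ∀ i ∈ Finset.univ.erase p, ‖v i + (Pi.single p c : ι → E) i‖ ^ 2 = ‖v i‖ ^ 2 :=
    fun i hi ↦ by rw [Pi.single_eq_of_ne (Finset.ne_of_mem_erase hi), add_zero]
  simp only [Pi.add_apply]
  rw [← Finset.add_sum_erase _ _ (Finset.mem_univ p),
    ← Finset.add_sum_erase _ _ (Finset.mem_univ p), Finset.sum_congr rfl hoff, Pi.single_eq_same]
  ring

lemma apply_eq_of_sum_sq_norm_add_single_eq {v w : ι → ℂ} (p : ι)
    (h₀ : ∑ i, ‖v i‖ ^ 2 = ∑ i, ‖w i‖ ^ 2)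
    (h₁ : ∑ i, ‖(v + Pi.single p 1 : ι → ℂ) i‖ ^ 2 = ∑ i, ‖(w + Pi.single p 1 : ι → ℂ) i‖ ^ 2)
    (hI : ∑ i, ‖(v + Pi.single p Complex.I : ι → ℂ) i‖ ^ 2
      = ∑ i, ‖(w + Pi.single p Complex.I : ι → ℂ) i‖ ^ 2) :
    v p = w p := by
  rw [sum_sq_norm_add_single, sum_sq_norm_add_single, Complex.sq_norm_add_one,
    Complex.sq_norm_add_one, h₀] at h₁
  rw [sum_sq_norm_add_single, sum_sq_norm_add_single, Complex.sq_norm_add_I,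
    Complex.sq_norm_add_I, h₀] at hI
  exact Complex.ext (by linarith) (by linarith)

theorem injective_sum_sq_norm_of_forall_exists_selector {κ J : Type*} [Fintype κ]
    (M : J → Matrix κ ι ℂ) (b : J → ι → ℂ)
    (h : ∀ k : κ, ∃ (N : Matrix κ ι ℂ) (p : ι), (∀ x : κ → ℂ, (Nᴴ *ᵥ x) p = x k) ∧
      ∀ c ∈ ({0, 1, Complex.I} : Set ℂ), ∃ j, M j = N ∧ b j = Pi.single p c) :
    Function.Injective (fun x : κ → ℂ => fun j : J => ∑ i, ‖((M j)ᴴ *ᵥ x + b j) i‖ ^ 2) := by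
  intro x y hxy
  funext k
  obtain ⟨N, p, hN, hshifts⟩ := h k
  have hmeas : ∀ c ∈ ({0, 1, Complex.I} : Set ℂ),
      ∑ i, ‖(Nᴴ *ᵥ x + Pi.single p c : ι → ℂ) i‖ ^ 2
        = ∑ i, ‖(Nᴴ *ᵥ y + Pi.single p c : ι → ℂ) i‖ ^ 2 := by
    intro c hc
    obtain ⟨j, rfl, hb⟩ := hshifts c hc
    simpa only [hb] using congrFun hxy j
  have h₀ := hmeas 0 (by simp)
  simp only [Pi.single_zero, add_zero] at h₀
  rw [← hN x, ← hN y]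
  exact apply_eq_of_sum_sq_norm_add_single_eq p h₀ (hmeas 1 (by simp))
    (hmeas Complex.I (by simp))

end SingleShift

section Blocks

variable {R : Type*} [NonAssocSemiring R] [StarRing R] (r d : ℕ)

def blockSelector (t : ℕ) : Matrix (Fin d) (Fin r) R :=
  Matrix.of fun k i => if (k : ℕ) = t * r + i then 1 else 0

lemma conjTranspose_blockSelector_mulVec [NeZero r] (x : Fin d → R) (k : Fin d) :
    ((blockSelector r d ((k : ℕ) / r) : Matrix (Fin d) (Fin r) R)ᴴ *ᵥ x) (Fin.ofNat r k)
      = x k := by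
  simp only [mulVec, dotProduct, conjTranspose_apply, blockSelector, of_apply, Fin.val_ofNat]
  rw [Finset.sum_eq_single k]
  · simp [Nat.div_add_mod']
  · intro l _ hl
    have : (l : ℕ) ≠ k / r * r + k % r := by rw [Nat.div_add_mod']; exact Fin.val_ne_of_ne hl
    simp [this]
  · simp

end Blocks

lemma Nat.div_lt_div_add_ite_dvd {k d : ℕ} (r : ℕ) (hk : k < d) :
    k / r < d / r + if r ∣ d then 0 else 1 := by
  split_ifs with hdvd
  · exact Nat.div_lt_div_of_lt_of_dvd hdvd hk
  · exact Nat.lt_succ_of_le (Nat.div_le_div_right hk.le)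

def blockIndex (r d n : ℕ) : ℕ :=
  if n < d then n / r else if n < 2 * d then (n - d) / r else n - 2 * d

def blockShift (r d : ℕ) [NeZero r] (n : ℕ) : Fin r → ℂ :=
  if n < d then Pi.single (Fin.ofNat r n) 1
  else if n < 2 * d then Pi.single (Fin.ofNat r (n - d)) Complex.I else 0

theorem gapr_exists_complex_general
    (r d m : ℕ) (hr : 1 ≤ r)
    (hm : 2 * d + d / r + (if r ∣ d then 0 else 1) ≤ m) :
    ∃ (M : Fin m → Matrix (Fin d) (Fin r) ℂ) (b : Fin m → Fin r → ℂ),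
      Function.Injective (fun x : Fin d → ℂ => fun j : Fin m =>
        ∑ i : Fin r, ‖((M j)ᴴ.mulVec x + b j) i‖ ^ 2) := by
  have : NeZero r := ⟨by omega⟩
  rw [add_assoc] at hm
  refine ⟨fun j => blockSelector r d (blockIndex r d j), fun j => blockShift r d j,
    injective_sum_sq_norm_of_forall_exists_selector _ _ fun k => ?_⟩
  have hk := k.isLt
  have hblock := Nat.div_lt_div_add_ite_dvd r hk
  generalize d / r + (if r ∣ d then 0 else 1) = N at hm hblock
  refine ⟨blockSelector r d ((k : ℕ) / r), Fin.ofNat r k,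
    (conjTranspose_blockSelector_mulVec r d · k), ?_⟩
  rintro c (rfl | rfl | rfl)
  · have h₁ : ¬ 2 * d + (k : ℕ) / r < d := not_lt.2 (Nat.le_add_right_of_le (by omega))
    have h₂ : ¬ 2 * d + (k : ℕ) / r < 2 * d := by simp
    exact ⟨⟨2 * d + (k : ℕ) / r, by omega⟩, by simp [blockIndex, h₁, h₂],
      by simp [blockShift, h₁, h₂]⟩
  · exact ⟨⟨k, by omega⟩, by simp [blockIndex, hk], by simp [blockShift, hk]⟩
  · have h₁ : ¬ d + (k : ℕ) < d := by omega
    have h₂ : d + (k : ℕ) < 2 * d := by omega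
    exact ⟨⟨d + k, by omega⟩, by simp [blockIndex, h₁, h₂], by simp [blockShift, h₁, h₂]⟩

/-- For `m ≥ 2d + ⌊d/r⌋ + ε_{d,r}` (with `ε_{d,r} = 0` if `r ∣ d` and
`1` otherwise) there exist measurements `{(M_j, b_j)}_{j=1}^m ⊂ ℂ^{d×r} × ℂ^r`
having the generalized affine phase retrieval property for ℂ^d. -/
theorem gapr_exists_complex
    (r d m : ℕ) (hr : 1 ≤ r) (hd : 1 ≤ d)
    (hm : 2 * d + d / r + (if r ∣ d then 0 else 1) ≤ m) :
    ∃ (M : Fin m → Matrix (Fin d) (Fin r) ℂ) (b : Fin m → Fin r → ℂ),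
      Function.Injective (fun x : Fin d → ℂ => fun j : Fin m =>
        ∑ i : Fin r, ‖((M j)ᴴ.mulVec x + b j) i‖ ^ 2) :=
  gapr_exists_complex_general r d m hr hm
end
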